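/- Let N be a single-qubit quantum channel, p ∈ [0,1), and let Ñ_p be the linear map on 2×2 matrices defined by Ñ_p(I) = (N(I) − pI)/(1−p) and Ñ_p(P) = N(P)/(1−p) for P ∈ {X,Y,Z}, so that N = N_p^depo ∘ Ñ_p where N_p^depo(ρ) = (1−p)ρ + p·Tr[ρ]·I/2 is the depolarizing channel. Let C = C_L∘⋯∘C_1 be an L-layered noisy circuit with layers C_j(ρ) = N^{⊗n}(U_j ρ U_j†) for 1 ≤ j < L and C_L(ρ) = V N^{⊗n}(U_L ρ U_L†) V†, where U_1,…,U_L are 2^n×2^n unitaries and V = V_1⊗⋯⊗V_n is a tensor product of 2×2 unitaries, and let C̃ = C̃_L∘⋯∘C̃_1 be the circuit obtained by replacing each occurrence of N with Ñ_p. Then for every Pauli path γ = (P_0,…,P_L) ∈ P_n^{L+1}: Φ_γ(C) = (1−p)^{|γ|} · Φ_γ(C̃), where |γ| = Σ_{j=1}^L |P_j|. -/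

import Mathlib

open scoped Kronecker
open Matrix
open scoped ComplexOrder

noncomputable section

abbrev QMat := Matrix (Fin 2) (Fin 2) ℂ

abbrev NMat (n : ℕ) := Matrix (Fin n → Fin 2) (Fin n → Fin 2) ℂ

/-- The four single-qubit Pauli matrices `I, X, Y, Z`. -/
def pauli : Fin 4 → QMat :=
  ![1, !![0, 1; 1, 0], !![0, -Complex.I; Complex.I, 0], !![1, 0; 0, -1]]

/-- The non-identity Paulis `X, Y, Z`. -/
def pauliXYZ (i : Fin 3) : QMat := pauli i.succ

/-- The `n`-qubit Pauli string indexed by `s : Fin n → Fin 4`. -/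
def pauliString {n : ℕ} (s : Fin n → Fin 4) : NMat n :=
  Matrix.of fun i j => ∏ k, pauli (s k) (i k) (j k)

/-- Support of a Pauli string. -/
def psupp {n : ℕ} (s : Fin n → Fin 4) : Finset (Fin n) :=
  Finset.univ.filter fun k => s k ≠ 0

/-- The observable with real Pauli coefficients `a`. -/
def obsOf {n : ℕ} (a : (Fin n → Fin 4) → ℝ) : NMat n :=
  ∑ s : Fin n → Fin 4, (a s : ℂ) • pauliString s

/-- Normalized Frobenius norm squared, `‖M‖_F² = Tr[Mᴴ M]/dim`. -/
def frobSq {m : Type*} [Fintype m] (M : Matrix m m ℂ) : ℝ :=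
  (Matrix.trace (Mᴴ * M)).re / (Fintype.card m : ℝ)

def IsUnitary {m : Type*} [Fintype m] [DecidableEq m] (U : Matrix m m ℂ) : Prop :=
  U * Uᴴ = 1 ∧ Uᴴ * U = 1

/-- Hilbert–Schmidt adjoint of a (linear) map on matrices:
`Φ†(A) i j = conj (Tr[Aᴴ Φ(E_{ij})])`. -/
def hsAdj {m : Type*} [Fintype m] [DecidableEq m]
    (Φ : Matrix m m ℂ → Matrix m m ℂ) (A : Matrix m m ℂ) : Matrix m m ℂ :=
  Matrix.of fun i j => (starRingEnd ℂ) (Matrix.trace (Aᴴ * Φ (Matrix.single i j 1)))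

/-- Pauli transfer matrix entry of a single-qubit map. -/
def ptm (Φ : QMat → QMat) (a b : Fin 4) : ℂ :=
  Matrix.trace (pauli a * Φ (pauli b)) / 2

/-- Tensor product `Φ 0 ⊗ Φ 1 ⊗ ⋯ ⊗ Φ (n-1)` of single-qubit (linear) maps,
defined via the Pauli transfer matrices. -/
def tensorMap {n : ℕ} (Φ : Fin n → QMat → QMat) (M : NMat n) : NMat n :=
  ∑ s : Fin n → Fin 4, ∑ t : Fin n → Fin 4,
    ((∏ k, ptm (Φ k) (s k) (t k)) * (Matrix.trace (pauliString t * M) / ((2 : ℂ) ^ n))) •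
      pauliString s

/-- `n`-fold tensor power `Φ^{⊗n}` of a single-qubit (linear) map. -/
def tensorPow (n : ℕ) (Φ : QMat → QMat) : NMat n → NMat n :=
  tensorMap fun _ => Φ

/-- Tensor product of `n` single-qubit matrices. -/
def qprod {n : ℕ} (V : Fin n → QMat) : NMat n :=
  Matrix.of fun i j => ∏ k, V k (i k) (j k)

/-- The single-qubit normal-form map `N'` with parameters `(D, t)`:
`N'(I) = I + Σ t_i σ_i` and `N'(σ_i) = D_i σ_i`. -/
def normalForm (D t : Fin 3 → ℝ) (M : QMat) : QMat :=
  (Matrix.trace M / 2) • (1 + ∑ i, (t i : ℂ) • pauliXYZ i) +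
    ∑ i, ((D i : ℂ) * (Matrix.trace (pauliXYZ i * M) / 2)) • pauliXYZ i

/-- `Υ(D,t) = max_{‖a‖₂=1} Σ_i a_i² D_i² + (Σ_i a_i t_i)²`. -/
def Upsilon (D t : Fin 3 → ℝ) : ℝ :=
  sSup { r : ℝ | ∃ a : Fin 3 → ℝ, (∑ i, a i ^ 2) = 1 ∧
    r = (∑ i, a i ^ 2 * D i ^ 2) + (∑ i, a i * t i) ^ 2 }

/-- Choi matrix of a single-qubit map. -/
def choi (Φ : QMat → QMat) : Matrix (Fin 2 × Fin 2) (Fin 2 × Fin 2) ℂ :=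
  Matrix.of fun p q => Φ (Matrix.single p.1 q.1 1) p.2 q.2

/-- A single-qubit quantum channel: linear, trace preserving, completely positive. -/
structure IsChannel (Φ : QMat → QMat) : Prop where
  linear : IsLinearMap ℂ Φ
  tracePreserving : ∀ M, Matrix.trace (Φ M) = Matrix.trace M
  completelyPositive : (choi Φ).PosSemidef

/-- Unitary 1-design (finitely supported distribution). -/
def IsOneDesign {ι : Type*} [Fintype ι] (w : ι → ℝ) (W : ι → QMat) : Prop :=
  ∀ M : QMat, ∑ i, (w i : ℂ) • (W i * M * (W i)ᴴ) = (Matrix.trace M / 2) • (1 : QMat)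

/-- The swap (flip) operator on two qubits. -/
def swapOp : Matrix (Fin 2 × Fin 2) (Fin 2 × Fin 2) ℂ :=
  Matrix.of fun p q => if p.1 = q.2 ∧ p.2 = q.1 then 1 else 0

/-- Unitary 2-design: the twirl of any `M` matches the Haar value
`c_I • 1 + c_F • F` (closed form of the Haar average on `U(2)`). -/
def IsTwoDesign {ι : Type*} [Fintype ι] (w : ι → ℝ) (W : ι → QMat) : Prop :=
  ∀ M : Matrix (Fin 2 × Fin 2) (Fin 2 × Fin 2) ℂ,
    ∑ i, (w i : ℂ) • ((W i ⊗ₖ W i) * M * (W i ⊗ₖ W i)ᴴ) =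
      ((Matrix.trace M - Matrix.trace (swapOp * M) / 2) / 3) •
          (1 : Matrix (Fin 2 × Fin 2) (Fin 2 × Fin 2) ℂ) +
        ((Matrix.trace (swapOp * M) - Matrix.trace M / 2) / 3) • swapOp

/-- `η`-approximate scrambler (finitely supported distribution over `U(2)`). -/
def IsApproxScrambler {ι : Type*} [Fintype ι] (η : ℝ) (w : ι → ℝ) (U : ι → QMat) : Prop :=
  (∀ a b : Fin 4, a ≠ b →
      ∑ i, (w i : ℂ) • (((U i)ᴴ * pauli a * U i) ⊗ₖ ((U i)ᴴ * pauli b * U i)) = 0) ∧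
    ∀ a b : Fin 3,
      ∑ i, w i * ((Matrix.trace (pauliXYZ a * U i * pauliXYZ b * (U i)ᴴ)).re / 2) ^ 2 ≤
        (1 + 2 * η) / 3

/-- Locally unbiased distribution over linear maps on `n`-qubit matrices. -/
def LocallyUnbiased (n : ℕ) {ι : Type*} [Fintype ι] (w : ι → ℝ)
    (C : ι → NMat n → NMat n) : Prop :=
  ∃ (m : ℕ) (v : Fin n → Fin m → ℝ) (W : Fin n → Fin m → QMat),
    (∀ j k, 0 ≤ v j k) ∧ (∀ j, ∑ k, v j k = 1) ∧ (∀ j k, IsUnitary (W j k)) ∧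
      (∀ j, IsOneDesign (v j) (W j)) ∧
      ∀ A B : NMat n,
        ∑ i, (w i : ℂ) • (C i A ⊗ₖ C i B) =
          ∑ i, ∑ f : Fin n → Fin m,
            ((w i * ∏ j, v j (f j) : ℝ) : ℂ) •
              (C i (qprod (fun j => W j (f j)) * A * (qprod fun j => W j (f j))ᴴ) ⊗ₖ
                C i (qprod (fun j => W j (f j)) * B * (qprod fun j => W j (f j))ᴴ))

/-- Pauli-invariant distribution over linear maps on `n`-qubit matrices. -/
def PauliInvariant (n : ℕ) {ι : Type*} [Fintype ι] (w : ι → ℝ)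
    (C : ι → NMat n → NMat n) : Prop :=
  ∀ A B : NMat n,
    ∑ i, (w i : ℂ) • (C i A ⊗ₖ C i B) =
      ((4 : ℂ) ^ n)⁻¹ • ∑ r : Fin n → Fin 4, ∑ i, (w i : ℂ) •
        (C i (pauliString r * A * pauliString r) ⊗ₖ C i (pauliString r * B * pauliString r))

/-- Fourier coefficient `Φ_γ(C) = Π_j 2^{-n} Tr[P_j C_j(P_{j-1})]` of a Pauli path. -/
def pathCoeff {n L : ℕ} (Cs : Fin L → NMat n → NMat n)
    (γ : Fin (L + 1) → Fin n → Fin 4) : ℂ :=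
  ∏ j : Fin L,
    (Matrix.trace (pauliString (γ j.succ) * Cs j (pauliString (γ j.castSucc))) / ((2 : ℂ) ^ n))

/-- Path weight `|γ| = Σ_{j=1}^L |P_j|`. -/
def pathWeight {n L : ℕ} (γ : Fin (L + 1) → Fin n → Fin 4) : ℕ :=
  ∑ j : Fin L, (psupp (γ j.succ)).card

/-- The (non-physical) map `Ñ_p` with `Ñ_p(I) = (N(I) - pI)/(1-p)` and
`Ñ_p(σ) = N(σ)/(1-p)` for `σ ∈ {X,Y,Z}`. -/
def tildeMap (N : QMat → QMat) (p : ℝ) (M : QMat) : QMat :=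
  (Matrix.trace M / 2) • (((1 : ℂ) - (p : ℂ))⁻¹ • (N 1 - (p : ℂ) • (1 : QMat))) +
    ∑ i : Fin 3, (Matrix.trace (pauliXYZ i * M) / 2) • (((1 : ℂ) - (p : ℂ))⁻¹ • N (pauliXYZ i))

/-- The layers of an `L`-layered noisy circuit: `C_j(ρ) = N^{⊗n}(U_j ρ U_j†)` for `j < L`,
and the last layer is followed by the single-qubit layer `V`. -/
def layerMaps {n L : ℕ} (Nm : QMat → QMat) (U : Fin L → NMat n) (Vt : NMat n)
    (j : Fin L) (ρ : NMat n) : NMat n :=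
  if j.val = L - 1 then Vt * tensorPow n Nm (U j * ρ * (U j)ᴴ) * Vtᴴ
  else tensorPow n Nm (U j * ρ * (U j)ᴴ)

/-- Composition `C_L ∘ ⋯ ∘ C_1` of the layers. -/
def circuitOf {n L : ℕ} (lm : Fin L → NMat n → NMat n) (ρ : NMat n) : NMat n :=
  (List.finRange L).foldl (fun σ j => lm j σ) ρ

/-- Operator (spectral) norm of a matrix, as the `ℓ²→ℓ²` operator norm. -/
def specNorm {m : Type*} [Fintype m] (M : Matrix m m ℂ) : ℝ :=
  Real.sqrt (sSup { r : ℝ | ∃ v : m → ℂ,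
    (∑ x, Complex.normSq (v x)) = 1 ∧ r = ∑ x, Complex.normSq (M.mulVec v x) })

/-- The square root `PosSemidef.sqrt` of the older Mathlib (removed since), spelled out. -/
def psdSqrt {m : Type*} [Fintype m] [DecidableEq m] {A : Matrix m m ℂ} (hA : A.PosSemidef) :
    Matrix m m ℂ :=
  (hA.1.eigenvectorUnitary : Matrix m m ℂ) * Matrix.diagonal ((↑) ∘ (Real.sqrt ·) ∘ hA.1.eigenvalues) *
    (star hA.1.eigenvectorUnitary : Matrix m m ℂ)

/-- Trace norm `‖M‖₁ = Tr √(Mᴴ M)` (sum of singular values). -/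
def traceNorm {m : Type*} [Fintype m] [DecidableEq m] (M : Matrix m m ℂ) : ℝ :=
  (Matrix.trace (psdSqrt (Matrix.posSemidef_conjTranspose_mul_self M))).re


/-! Since `N` is trace preserving, its Pauli transfer matrix is that of `Ñ_p` with rows `X, Y, Z`
scaled by `1 - p`, i.e. `N = N_p^depo ∘ Ñ_p`. In the coefficient `2⁻ⁿ Tr[P_j C_j(P_{j-1})]` of one
layer, the row index on qubit `k` is the Pauli that the final local unitary `V_k` (or the identity)
conjugates onto `P_j^(k)`; unitary conjugation preserves being the identity or traceless, so that
index is nontrivial exactly on the support of `P_j`, and the layer picks up `(1 - p) ^ |P_j|`. -/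

lemma pauli_zero : pauli 0 = 1 := rfl

lemma trace_pauli (a : Fin 4) : trace (pauli a) = if a = 0 then 2 else 0 := by
  fin_cases a <;> simp [pauli, Matrix.trace, Fin.sum_univ_two]

lemma trace_pauli_mul_pauli (a b : Fin 4) :
    trace (pauli a * pauli b) = if a = b then 2 else 0 := by
  fin_cases a <;> fin_cases b <;>
    simp [pauli, Matrix.trace, Fin.sum_univ_two, Complex.ext_iff] <;>
    norm_num [Complex.I_mul_I]

section qprod

variable {n : ℕ}

lemma pauliString_eq_qprod (s : Fin n → Fin 4) :
    pauliString s = qprod fun k => pauli (s k) := rfl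

lemma qprod_mul_qprod (A B : Fin n → QMat) :
    qprod A * qprod B = qprod fun k => A k * B k := by
  ext i j
  simp only [Matrix.mul_apply, qprod, Matrix.of_apply, ← Finset.prod_mul_distrib]
  exact (Fintype.prod_sum fun k x => A k (i k) x * B k x (j k)).symm

lemma conjTranspose_qprod (A : Fin n → QMat) : (qprod A)ᴴ = qprod fun k => (A k)ᴴ := by
  ext i j
  simp [qprod, Matrix.conjTranspose_apply]

lemma trace_qprod (A : Fin n → QMat) : trace (qprod A) = ∏ k, trace (A k) := by
  simp only [Matrix.trace, Matrix.diag, qprod, Matrix.of_apply]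
  exact (Fintype.prod_sum fun k x => A k x x).symm

lemma qprod_one : qprod (fun _ => (1 : QMat)) = (1 : NMat n) := by
  ext i j
  simp only [qprod, Matrix.of_apply, Matrix.one_apply]
  by_cases h : i = j
  · simp [h]
  · obtain ⟨k, hk⟩ := Function.ne_iff.mp h
    rw [if_neg h]
    exact Finset.prod_eq_zero (Finset.mem_univ k) (by simp [hk])

lemma trace_pauliString_mul_conj_qprod (W : Fin n → QMat) (a s : Fin n → Fin 4) :
    trace (pauliString a * (qprod W * pauliString s * (qprod W)ᴴ)) =
      ∏ k, trace (pauli (a k) * W k * pauli (s k) * (W k)ᴴ) := by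
  simp only [pauliString_eq_qprod, conjTranspose_qprod, qprod_mul_qprod, trace_qprod, mul_assoc]

end qprod

/-- The eigenvalues of the depolarizing channel `N_p^depo` on the Pauli basis. -/
def depolEigenvalue (p : ℝ) (a : Fin 4) : ℂ := if a = 0 then 1 else 1 - p

lemma prod_depolEigenvalue {n : ℕ} (p : ℝ) (a : Fin n → Fin 4) :
    ∏ k, depolEigenvalue p (a k) = (1 - (p : ℂ)) ^ (psupp a).card := by
  rw [psupp, ← Finset.prod_const, Finset.prod_filter]
  exact Finset.prod_congr rfl fun k _ => by by_cases h : a k = 0 <;> simp [depolEigenvalue, h]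

lemma tildeMap_one (N : QMat → QMat) (p : ℝ) :
    tildeMap N p 1 = ((1 : ℂ) - p)⁻¹ • (N 1 - (p : ℂ) • (1 : QMat)) := by
  have htr : ∀ i : Fin 3, trace (pauliXYZ i) = 0 := fun i => by
    simp [pauliXYZ, trace_pauli, Fin.succ_ne_zero]
  simp [tildeMap, Matrix.trace_one, htr]

lemma tildeMap_pauli_succ (N : QMat → QMat) (p : ℝ) (i : Fin 3) :
    tildeMap N p (pauli i.succ) = ((1 : ℂ) - p)⁻¹ • N (pauli i.succ) := by
  have htr : trace (pauli i.succ) = 0 := by simp [trace_pauli, Fin.succ_ne_zero]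
  have horth : ∀ j : Fin 3, trace (pauli j.succ * pauli i.succ) = if j = i then 2 else 0 :=
    fun j => by simp [trace_pauli_mul_pauli, Fin.succ_inj]
  simp [tildeMap, htr, pauliXYZ, horth, apply_ite (· / (2 : ℂ)), ite_smul, Finset.sum_ite_eq']

/-- The Pauli transfer matrix form of `N = N_p^depo ∘ Ñ_p`. -/
lemma ptm_eq_depolEigenvalue_mul_ptm_tildeMap {N : QMat → QMat}
    (hN : ∀ M, trace (N M) = trace M) {p : ℝ} (hp : p ≠ 1) (a b : Fin 4) :
    ptm N a b = depolEigenvalue p a * ptm (tildeMap N p) a b := by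
  have hp' : (1 : ℂ) - p ≠ 0 := sub_ne_zero.mpr (by exact_mod_cast hp.symm)
  rcases Fin.eq_zero_or_eq_succ b with rfl | ⟨i, rfl⟩
  · rw [ptm, ptm, pauli_zero, tildeMap_one]
    by_cases ha : a = 0
    · subst ha
      simp only [depolEigenvalue, ↓reduceIte, one_mul, pauli_zero, Matrix.trace_smul,
        Matrix.trace_sub, hN 1, Matrix.trace_one, smul_eq_mul, Fintype.card_fin, Nat.cast_ofNat]
      field_simp
    · simp only [depolEigenvalue, if_neg ha, Matrix.mul_smul, Matrix.trace_smul, Matrix.mul_sub,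
        Matrix.trace_sub, mul_one, trace_pauli, smul_eq_mul]
      field_simp
      ring
  · rw [ptm, ptm, tildeMap_pauli_succ]
    by_cases ha : a = 0
    · subst ha
      simp [pauli_zero, hN, trace_pauli, Fin.succ_ne_zero, Matrix.trace_smul]
    · rw [depolEigenvalue, if_neg ha, Matrix.mul_smul, Matrix.trace_smul, smul_eq_mul]
      field_simp

/-- Unitary conjugation maps `I` to `I` and traceless matrices to traceless ones. -/
lemma depolEigenvalue_mul_trace_conj {W : QMat} (hW : IsUnitary W) (p : ℝ) (a b : Fin 4) :
    depolEigenvalue p b * trace (pauli a * W * pauli b * Wᴴ) =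
      depolEigenvalue p a * trace (pauli a * W * pauli b * Wᴴ) := by
  by_cases ha : a = 0 <;> by_cases hb : b = 0
  · rw [ha, hb]
  · rw [ha, pauli_zero, one_mul, Matrix.trace_mul_comm, ← mul_assoc, hW.2, one_mul,
      trace_pauli, if_neg hb, mul_zero, mul_zero]
  · rw [hb, pauli_zero, mul_one, mul_assoc, hW.1, mul_one, trace_pauli, if_neg ha,
      mul_zero, mul_zero]
  · simp [depolEigenvalue, ha, hb]

lemma trace_pauliString_mul_conj_tensorMap {n : ℕ} (Φ : Fin n → QMat → QMat)
    (W : Fin n → QMat) (a : Fin n → Fin 4) (M : NMat n) :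
    trace (pauliString a * (qprod W * tensorMap Φ M * (qprod W)ᴴ)) =
      ∑ s : Fin n → Fin 4, ∑ t : Fin n → Fin 4,
        ((∏ k, ptm (Φ k) (s k) (t k)) * (trace (pauliString t * M) / 2 ^ n)) *
          ∏ k, trace (pauli (a k) * W k * pauli (s k) * (W k)ᴴ) := by
  simp only [tensorMap, Matrix.sum_mul, Matrix.mul_sum, Matrix.smul_mul, Matrix.mul_smul,
    Matrix.trace_sum, Matrix.trace_smul, smul_eq_mul, trace_pauliString_mul_conj_qprod]

lemma trace_pauliString_mul_conj_tensorPow {n : ℕ} {N : QMat → QMat}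
    (hN : ∀ M, trace (N M) = trace M) {p : ℝ} (hp : p ≠ 1) {W : Fin n → QMat}
    (hW : ∀ k, IsUnitary (W k)) (a : Fin n → Fin 4) (M : NMat n) :
    trace (pauliString a * (qprod W * tensorPow n N M * (qprod W)ᴴ)) =
      (1 - (p : ℂ)) ^ (psupp a).card *
        trace (pauliString a * (qprod W * tensorPow n (tildeMap N p) M * (qprod W)ᴴ)) := by
  simp only [tensorPow, trace_pauliString_mul_conj_tensorMap, Finset.mul_sum]
  refine Finset.sum_congr rfl fun s _ => Finset.sum_congr rfl fun t _ => ?_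
  have hprod : (∏ k, ptm N (s k) (t k)) * ∏ k, trace (pauli (a k) * W k * pauli (s k) * (W k)ᴴ) =
      (1 - (p : ℂ)) ^ (psupp a).card * ((∏ k, ptm (tildeMap N p) (s k) (t k)) *
        ∏ k, trace (pauli (a k) * W k * pauli (s k) * (W k)ᴴ)) := by
    simp only [← prod_depolEigenvalue, ← Finset.prod_mul_distrib,
      ptm_eq_depolEigenvalue_mul_ptm_tildeMap hN hp]
    refine Finset.prod_congr rfl fun k _ => ?_
    linear_combination ptm (tildeMap N p) (s k) (t k) *
      depolEigenvalue_mul_trace_conj (hW k) p (a k) (s k)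
  linear_combination trace (pauliString t * M) / 2 ^ n * hprod

lemma trace_pauliString_mul_layerMaps {n L : ℕ} {N : QMat → QMat}
    (hN : ∀ M, trace (N M) = trace M) {p : ℝ} (hp : p ≠ 1) (U : Fin L → NMat n)
    {Vf : Fin n → QMat} (hV : ∀ k, IsUnitary (Vf k)) (j : Fin L) (a : Fin n → Fin 4)
    (ρ : NMat n) :
    trace (pauliString a * layerMaps N U (qprod Vf) j ρ) =
      (1 - (p : ℂ)) ^ (psupp a).card *
        trace (pauliString a * layerMaps (tildeMap N p) U (qprod Vf) j ρ) := by
  unfold layerMaps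
  split_ifs
  · exact trace_pauliString_mul_conj_tensorPow hN hp hV a _
  · have hone : IsUnitary (1 : QMat) := ⟨by simp, by simp⟩
    simpa [qprod_one] using
      trace_pauliString_mul_conj_tensorPow hN hp (W := fun _ => 1) (fun _ => hone) a
        (U j * ρ * (U j)ᴴ)

theorem stmt_11_general (n L : ℕ)
    (N : QMat → QMat) (hN : IsChannel N)
    (p : ℝ) (hp1 : p < 1)
    (U : Fin L → NMat n)
    (Vf : Fin n → QMat) (hV : ∀ k, IsUnitary (Vf k))
    (γ : Fin (L + 1) → Fin n → Fin 4) :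
    pathCoeff (layerMaps N U (qprod Vf)) γ =
      (((1 - p) ^ pathWeight γ : ℝ) : ℂ) *
        pathCoeff (layerMaps (tildeMap N p) U (qprod Vf)) γ := by
  rw [pathCoeff, pathCoeff, pathWeight, Complex.ofReal_pow, Complex.ofReal_sub,
    Complex.ofReal_one, ← Finset.prod_pow_eq_pow_sum, ← Finset.prod_mul_distrib]
  refine Finset.prod_congr rfl fun j _ => ?_
  rw [trace_pauliString_mul_layerMaps hN.tracePreserving hp1.ne U hV, mul_div_assoc]

/-- (Proportionality of Fourier coefficients.) For a noisy circuit `C`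
and the circuit `C̃` obtained by replacing each noise channel `N` with `Ñ_p`:
`Φ_γ(C) = (1-p)^{|γ|}·Φ_γ(C̃)` for every Pauli path `γ`. -/
theorem stmt_11 (n L : ℕ) (hL : 0 < L)
    (N : QMat → QMat) (hN : IsChannel N)
    (p : ℝ) (hp0 : 0 ≤ p) (hp1 : p < 1)
    (U : Fin L → NMat n) (hU : ∀ j, IsUnitary (U j))
    (Vf : Fin n → QMat) (hV : ∀ k, IsUnitary (Vf k))
    (γ : Fin (L + 1) → Fin n → Fin 4) :
    pathCoeff (layerMaps N U (qprod Vf)) γ =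
      (((1 - p) ^ pathWeight γ : ℝ) : ℂ) *
        pathCoeff (layerMaps (tildeMap N p) U (qprod Vf)) γ :=
  stmt_11_general n L N hN p hp1 U Vf hV γ
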